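/- arXiv:1310.2092 — 6 statements merged into one kernel-verified Lean document; each statement's English description precedes it below -/
import Mathlib

section
/- Let k be an uncountable field and let (p_n)_{n ≥ 0} be a sequence of polynomials in k[t]. Suppose that for every λ ∈ k there exists n₀ such that p_n(λ) = 0 for all n ≥ n₀. Then only finitely many of the polynomials p_n are nonzero. -/
/-- Let `k` be an uncountable field and `(p n)` a sequence of polynomials in `k[t]`.
If every `λ ∈ k` is a root of all but finitely many of the `p n` (i.e. for every `λ`
there is `n₀` with `p n (λ) = 0` for all `n ≥ n₀`), then only finitely many of the
`p n` are nonzero. -/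
theorem finitely_many_nonzero_of_eventually_root
    {k : Type*} [Field k] [Uncountable k] (p : ℕ → Polynomial k)
    (h : ∀ lam : k, ∃ n₀ : ℕ, ∀ n ≥ n₀, (p n).eval lam = 0) :
    {n : ℕ | p n ≠ 0}.Finite := by
  have key : ∃ m : ℕ, ¬ {lam : k | ∀ n ≥ m, (p n).eval lam = 0}.Countable := by
    by_contra hc
    push_neg at hc
    have hcov : (Set.univ : Set k) ⊆ ⋃ m, {lam : k | ∀ n ≥ m, (p n).eval lam = 0} := by
      intro lam _
      obtain ⟨m, hm⟩ := h lam
      exact Set.mem_iUnion.mpr ⟨m, hm⟩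
    have : (Set.univ : Set k).Countable := (Set.countable_iUnion hc).mono hcov
    have : Countable k := Set.countable_univ_iff.mp this
    exact not_countable this
  obtain ⟨m, hm⟩ := key
  have hinf : {lam : k | ∀ n ≥ m, (p n).eval lam = 0}.Infinite := fun hfin => hm hfin.countable
  have hzero : ∀ n ≥ m, p n = 0 := by
    intro n hn
    apply Polynomial.eq_zero_of_infinite_isRoot
    have hsub : {lam : k | ∀ n ≥ m, (p n).eval lam = 0} ⊆ {lam : k | (p n).IsRoot lam} :=
      fun lam hlam => hlam n hn
    exact hinf.mono hsub
  exact (Set.finite_Iio m).subset (fun n hn => by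
    by_contra hlt
    exact hn (hzero n (le_of_not_gt hlt)))
end

section
/- Let k be an uncountable field and a ∈ k[[u,v]] a formal power series. Suppose that for every λ ∈ k, the image of a under the substitution u ↦ λv in k[[v]] is a polynomial (i.e., lies in k[v]). Then a itself is a polynomial, i.e., a ∈ k[u,v]. -/
/-!
Write `a = ∑ₙ aₙ` with `aₙ` homogeneous of degree `n`. The substitution `u ↦ λv` sends `a` to
`∑ₙ aₙ(λ, 1) vⁿ`, so the hypothesis says that for each `λ` the polynomials `aₙ(T, 1)` vanish at
`λ` for all `n` beyond some bound `N(λ)`. As `k` is uncountable, one bound `M` serves infinitely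
many `λ`; then `aₙ(T, 1)` has infinitely many roots, hence is zero, for all `n ≥ M`. Since
`aₙ(T, 1)` has the same coefficients as `aₙ`, all coefficients of `a` of degree `≥ M` vanish.
-/

/-- `IsSubstHom l φ` says that the `k`-algebra homomorphism
`φ : k[[u,v]] → k[[v]]` is "the" substitution homomorphism `u ↦ l·v, v ↦ v`:
it sends `u = X 0` to `l·v`, `v = X 1` to `v`, and it is continuous for the
adic topologies, i.e. it maps the `n`-th power of the maximal ideal `(u, v)`
into the `n`-th power of `(v)` for every `n`. These conditions determine `φ`
uniquely. -/
def IsSubstHom {k : Type*} [Field k] (l : k)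
    (φ : MvPowerSeries (Fin 2) k →ₐ[k] PowerSeries k) : Prop :=
  φ (MvPowerSeries.X 0) = PowerSeries.C l * PowerSeries.X ∧
  φ (MvPowerSeries.X 1) = PowerSeries.X ∧
  ∀ (n : ℕ) (f : MvPowerSeries (Fin 2) k),
    f ∈ (Ideal.span {MvPowerSeries.X 0, MvPowerSeries.X 1} :
        Ideal (MvPowerSeries (Fin 2) k)) ^ n →
      φ f ∈ (Ideal.span {PowerSeries.X} : Ideal (PowerSeries k)) ^ n

open Finset Filter

theorem Polynomial.eventually_eq_zero_of_forall_eventually_eval_eq_zero {R : Type*} [CommRing R]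
    [IsDomain R] [Uncountable R] {P : ℕ → Polynomial R}
    (h : ∀ x, ∀ᶠ n in atTop, (P n).eval x = 0) : ∀ᶠ n in atTop, P n = 0 := by
  choose N hN using fun x => (h x).exists_forall_of_atTop
  obtain ⟨M, hM⟩ : ∃ M, {x | N x = M}.Infinite := by
    by_contra! hfin
    refine Set.not_countable_univ ((Set.countable_iUnion fun M => (hfin M).countable).mono ?_)
    exact fun x _ => Set.mem_iUnion.mpr ⟨N x, rfl⟩
  filter_upwards [eventually_ge_atTop M] with n hn
  refine eq_zero_of_infinite_isRoot _ (hM.mono fun x hx => ?_)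
  exact hN x n (hx.symm ▸ hn)

theorem MvPowerSeries.eq_truncTotal_of_coeff_eq_zero {σ R : Type*} [Finite σ] [CommSemiring R]
    {f : MvPowerSeries σ R} {N : ℕ} (h : ∀ d : σ →₀ ℕ, N ≤ d.degree → coeff d f = 0) :
    f = truncTotal N f := by
  ext d
  rw [MvPolynomial.coeff_coe, coeff_truncTotal_eq_ite]
  split_ifs with hd
  · rfl
  · exact h d (not_lt.mp hd)

theorem Finset.mem_finsuppAntidiag_univ_iff {σ : Type*} [Fintype σ] [DecidableEq σ]
    {d : σ →₀ ℕ} {n : ℕ} : d ∈ finsuppAntidiag univ n ↔ d.degree = n := by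
  simp [Finsupp.degree_eq_sum]

section Line

variable {k : Type*} [Field k]

theorem isSubstHom_of_map_X {l : k} {φ : MvPowerSeries (Fin 2) k →ₐ[k] PowerSeries k}
    (h₀ : φ (MvPowerSeries.X 0) = PowerSeries.C l * PowerSeries.X)
    (h₁ : φ (MvPowerSeries.X 1) = PowerSeries.X) : IsSubstHom l φ := by
  refine ⟨h₀, h₁, fun n f hf => ?_⟩
  have hmap : Ideal.map φ (Ideal.span {MvPowerSeries.X 0, MvPowerSeries.X 1}) ≤
      Ideal.span {PowerSeries.X} := by
    rw [Ideal.map_span, Ideal.span_le]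
    rintro _ ⟨g, hg, rfl⟩
    rcases hg with rfl | rfl
    · rw [h₀]
      exact Ideal.mul_mem_left _ _ (Ideal.subset_span rfl)
    · rw [h₁]
      exact Ideal.subset_span rfl
  have hfφ := Ideal.mem_map_of_mem φ hf
  rw [Ideal.map_pow] at hfφ
  exact Ideal.pow_right_mono hmap n hfφ

theorem hasSubst_line (l : k) :
    MvPowerSeries.HasSubst ![PowerSeries.C l * PowerSeries.X, PowerSeries.X] :=
  MvPowerSeries.hasSubst_of_constantCoeff_zero fun s => by
    fin_cases s <;> simp [PowerSeries.X]

noncomputable def substLine (l : k) : MvPowerSeries (Fin 2) k →ₐ[k] PowerSeries k :=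
  MvPowerSeries.substAlgHom (hasSubst_line l)

theorem isSubstHom_substLine (l : k) : IsSubstHom l (substLine l) :=
  isSubstHom_of_map_X (MvPowerSeries.substAlgHom_X _ 0) (MvPowerSeries.substAlgHom_X _ 1)

/-- `dehomogenizedComponent f n` is `fₙ(T, 1)`, where `fₙ` is the homogeneous component of
degree `n` of `f`. -/
noncomputable def dehomogenizedComponent (f : MvPowerSeries (Fin 2) k) (n : ℕ) :
    Polynomial k :=
  ∑ d ∈ finsuppAntidiag univ n,
    Polynomial.C (MvPowerSeries.coeff d f) * Polynomial.X ^ d 0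

theorem coeff_dehomogenizedComponent (f : MvPowerSeries (Fin 2) k) (d : Fin 2 →₀ ℕ) :
    (dehomogenizedComponent f d.degree).coeff (d 0) = MvPowerSeries.coeff d f := by
  rw [dehomogenizedComponent, Polynomial.finsetSum_coeff,
    sum_eq_single_of_mem d (mem_finsuppAntidiag_univ_iff.mpr rfl)]
  · simp
  · intro e he hne
    rw [Polynomial.coeff_C_mul_X_pow, if_neg]
    intro h₀
    have h₁ : e 1 = d 1 := by
      have hdeg := mem_finsuppAntidiag_univ_iff.mp he
      simp only [Finsupp.degree_eq_sum, Fin.sum_univ_two] at hdeg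
      omega
    exact hne (Finsupp.ext fun i => by fin_cases i <;> simp [h₀, h₁])

theorem coeff_prod_pow_line (l : k) (d : Fin 2 →₀ ℕ) (n : ℕ) :
    MvPowerSeries.coeff (Finsupp.single () n)
      (d.prod fun s e => (![PowerSeries.C l * PowerSeries.X, PowerSeries.X] s) ^ e) =
      if d.degree = n then l ^ d 0 else 0 := by
  rw [← PowerSeries.coeff_def (n := n) (by simp), Finsupp.prod_fintype _ _ (by simp),
    Fin.prod_univ_two, Finsupp.degree_eq_sum, Fin.sum_univ_two]
  simp only [Fin.isValue, Matrix.cons_val_zero, Matrix.cons_val_one, Matrix.cons_val_fin_one,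
    mul_pow, ← map_pow, mul_assoc, ← pow_add, PowerSeries.coeff_C_mul_X_pow, eq_comm]

theorem coeff_substLine (l : k) (f : MvPowerSeries (Fin 2) k) (n : ℕ) :
    PowerSeries.coeff n (substLine l f) = (dehomogenizedComponent f n).eval l := by
  rw [PowerSeries.coeff_def (s := Finsupp.single () n) (n := n) (by simp), substLine,
    MvPowerSeries.substAlgHom_apply, MvPowerSeries.coeff_subst (hasSubst_line l),
    finsum_eq_sum_of_support_subset (s := finsuppAntidiag univ n) _ ?_]
  · simp only [coeff_prod_pow_line, dehomogenizedComponent, Polynomial.eval_finsetSum,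
      Polynomial.eval_mul, Polynomial.eval_C, Polynomial.eval_pow, Polynomial.eval_X]
    refine sum_congr rfl fun d hd => ?_
    rw [if_pos (mem_finsuppAntidiag_univ_iff.mp hd), smul_eq_mul]
  · intro d hd
    rw [mem_coe, mem_finsuppAntidiag_univ_iff]
    by_contra hne
    rw [Function.mem_support, coeff_prod_pow_line, if_neg hne, smul_zero] at hd
    exact hd rfl

end Line

/-- Let `k` be an uncountable field and `a ∈ k[[u,v]]`. If for every `λ ∈ k` the
image of `a` under the substitution `u ↦ λ·v` is a polynomial in `k[v]`, then `a`
is a polynomial in `k[u,v]`. -/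
theorem polynomial_of_all_substitutions_polynomial
    {k : Type*} [Field k] [Uncountable k] (a : MvPowerSeries (Fin 2) k)
    (h : ∀ (l : k) (φ : MvPowerSeries (Fin 2) k →ₐ[k] PowerSeries k),
      IsSubstHom l φ → ∃ p : Polynomial k, φ a = (p : PowerSeries k)) :
    ∃ q : MvPolynomial (Fin 2) k, a = (q : MvPowerSeries (Fin 2) k) := by
  have hline : ∀ l : k, ∀ᶠ n in atTop, (dehomogenizedComponent a n).eval l = 0 := by
    intro l
    obtain ⟨p, hp⟩ := h l (substLine l) (isSubstHom_substLine l)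
    filter_upwards [eventually_gt_atTop p.natDegree] with n hn
    rw [← coeff_substLine, hp, Polynomial.coeff_coe,
      Polynomial.coeff_eq_zero_of_natDegree_lt hn]
  obtain ⟨N, hN⟩ :=
    (Polynomial.eventually_eq_zero_of_forall_eventually_eval_eq_zero hline).exists_forall_of_atTop
  refine ⟨MvPowerSeries.truncTotal N a,
    MvPowerSeries.eq_truncTotal_of_coeff_eq_zero fun d hd => ?_⟩
  rw [← coeff_dehomogenizedComponent, hN _ hd, Polynomial.coeff_zero]
end

section
/- Let k be an uncountable field and a ∈ k[[u,v]] a formal power series. Suppose that for every polynomial f ∈ k[u,v] with f(0,0) = 0 there exists a polynomial b ∈ k[u,v] such that a ≡ b modulo the ideal generated by f in k[[u,v]]. Then a ∈ k[u,v], i.e., a is a polynomial. -/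
/-!
Reducing modulo `u - c v` restricts `a` to the line `u = c v`. If `a ≡ b mod (u - c v)` with `b`
a polynomial, then the degree-`n` homogeneous part `aₙ` of `a` satisfies `aₙ(c, 1) = 0` for every
`n > N(c) := deg b`. As `k` is uncountable, some value `n₀` of `N` is taken infinitely often, so
for `n > n₀` the one-variable polynomial `aₙ(X, 1)` has infinitely many roots and vanishes: all
coefficients of `a` of total degree `> n₀` are zero.
-/

open Finset
open scoped Polynomial

lemma exists_infinite_fiber_of_uncountable {α β : Type*} [Uncountable α] [Countable β]
    (f : α → β) : ∃ b, (f ⁻¹' {b}).Infinite := by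
  by_contra! h
  refine not_countable (α := α) (Set.countable_univ_iff.mp ?_)
  exact (Set.countable_iUnion fun b => (h b).countable).mono
    fun x _ => Set.mem_iUnion.2 ⟨f x, rfl⟩

@[simp, norm_cast]
lemma MvPolynomial.coe_sub {σ R : Type*} [CommRing R] (p q : MvPolynomial σ R) :
    ((p - q : MvPolynomial σ R) : MvPowerSeries σ R) = p - q :=
  map_sub MvPolynomial.coeToMvPowerSeries.ringHom p q

namespace MvPowerSeries

variable {σ R : Type*}

noncomputable def expPair (i j : ℕ) : Fin 2 →₀ ℕ := Finsupp.single 0 i + Finsupp.single 1 j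

@[simp] lemma expPair_apply_zero (i j : ℕ) : expPair i j 0 = i := by simp [expPair]

@[simp] lemma expPair_apply_one (i j : ℕ) : expPair i j 1 = j := by simp [expPair]

lemma degree_expPair (i j : ℕ) : (expPair i j).degree = i + j := by
  simp [Finsupp.degree_eq_sum, Fin.sum_univ_two]

lemma expPair_apply_self (d : Fin 2 →₀ ℕ) : expPair (d 0) (d 1) = d := by
  ext s; fin_cases s <;> simp

section CommSemiring

variable [CommSemiring R]

lemma eq_truncTotal_of_coeff_eq_zero_s4 [Finite σ] {p : MvPowerSeries σ R} {n : ℕ}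
    (h : ∀ d : σ →₀ ℕ, n ≤ d.degree → coeff d p = 0) : p = truncTotal n p := by
  ext d
  rw [MvPolynomial.coeff_coe, coeff_truncTotal_eq_ite]
  split_ifs with hd
  · rfl
  · exact h d (not_lt.mp hd)

lemma coeff_mul_X_eq_zero (f : MvPowerSeries σ R) {d : σ →₀ ℕ} {s : σ}
    (hd : d s = 0) : coeff d (f * X s) = 0 := by
  classical
  rw [X_def, coeff_mul_monomial, if_neg]
  intro hle
  have := Finsupp.single_le_iff.mp hle
  omega

lemma coeff_expPair_succ_mul_X_zero (f : MvPowerSeries (Fin 2) R) (i j : ℕ) :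
    coeff (expPair (i + 1) j) (f * X 0) = coeff (expPair i j) f := by
  rw [show expPair (i + 1) j = expPair i j + Finsupp.single 0 1 by
    simp only [expPair, Finsupp.single_add]; abel, X_def, coeff_add_mul_monomial, mul_one]

lemma coeff_expPair_succ_mul_X_one (f : MvPowerSeries (Fin 2) R) (i j : ℕ) :
    coeff (expPair i (j + 1)) (f * X 1) = coeff (expPair i j) f := by
  rw [show expPair i (j + 1) = expPair i j + Finsupp.single 1 1 by
    simp only [expPair, Finsupp.single_add]; abel, X_def, coeff_add_mul_monomial, mul_one]

/-- The degree-`n` homogeneous part of a power series in `u = X 0`, `v = X 1`, dehomogenized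
at `v = 1`. -/
noncomputable def dehomogenize (n : ℕ) : MvPowerSeries (Fin 2) R →ₗ[R] R[X] :=
  ∑ p ∈ antidiagonal n, (Polynomial.monomial p.1).comp (coeff (expPair p.1 p.2))

lemma dehomogenize_apply (n : ℕ) (f : MvPowerSeries (Fin 2) R) :
    dehomogenize n f =
      ∑ p ∈ antidiagonal n, Polynomial.monomial p.1 (coeff (expPair p.1 p.2) f) := by
  simp [dehomogenize]

lemma coeff_dehomogenize_degree (f : MvPowerSeries (Fin 2) R) (d : Fin 2 →₀ ℕ) :
    (dehomogenize d.degree f).coeff (d 0) = coeff d f := by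
  rw [dehomogenize_apply, Polynomial.finsetSum_coeff, sum_eq_single (d 0, d 1)]
  · simp [expPair_apply_self]
  · rintro ⟨i, j⟩ hij hne
    rw [Polynomial.coeff_monomial, if_neg]
    rintro rfl
    rw [HasAntidiagonal.mem_antidiagonal, Finsupp.degree_eq_sum, Fin.sum_univ_two] at hij
    exact hne (Prod.ext rfl (by dsimp only; omega))
  · simp [Finsupp.degree_eq_sum, Fin.sum_univ_two]

lemma dehomogenize_succ_mul_X_zero (f : MvPowerSeries (Fin 2) R) (n : ℕ) :
    dehomogenize (n + 1) (f * X 0) = dehomogenize n f * Polynomial.X := by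
  rw [dehomogenize_apply, Nat.antidiagonal_succ, sum_cons, sum_map,
    dehomogenize_apply, sum_mul]
  simp [coeff_expPair_succ_mul_X_zero, coeff_mul_X_eq_zero]

lemma dehomogenize_succ_mul_X_one (f : MvPowerSeries (Fin 2) R) (n : ℕ) :
    dehomogenize (n + 1) (f * X 1) = dehomogenize n f := by
  rw [dehomogenize_apply, Nat.antidiagonal_succ', sum_cons, sum_map,
    dehomogenize_apply]
  simp [coeff_expPair_succ_mul_X_one, coeff_mul_X_eq_zero]

lemma dehomogenize_coe_of_totalDegree_lt (p : MvPolynomial (Fin 2) R) {n : ℕ}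
    (hn : p.totalDegree < n) : dehomogenize n (p : MvPowerSeries (Fin 2) R) = 0 := by
  rw [dehomogenize_apply]
  refine sum_eq_zero fun q hq => ?_
  rw [HasAntidiagonal.mem_antidiagonal] at hq
  rw [MvPolynomial.coeff_coe, MvPolynomial.coeff_eq_zero_of_totalDegree_lt, map_zero]
  rwa [← Finsupp.degree_apply, degree_expPair, hq]

end CommSemiring

section CommRing

variable [CommRing R]

lemma dehomogenize_succ_mul_X_sub_C_mul_X (f : MvPowerSeries (Fin 2) R) (c : R) (n : ℕ) :
    dehomogenize (n + 1) (f * (X 0 - C c * X 1)) =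
      dehomogenize n f * (Polynomial.X - Polynomial.C c) := by
  rw [mul_sub, mul_left_comm, ← smul_eq_C_mul, map_sub, map_smul, dehomogenize_succ_mul_X_zero,
    dehomogenize_succ_mul_X_one, mul_sub, Polynomial.smul_eq_C_mul, mul_comm (Polynomial.C c)]

lemma isRoot_dehomogenize_of_sub_mem_span {a : MvPowerSeries (Fin 2) R}
    {b : MvPolynomial (Fin 2) R} {c : R} (hab : a - b ∈ Ideal.span {X 0 - C c * X 1})
    {n : ℕ} (hn : b.totalDegree < n) : (dehomogenize n a).IsRoot c := by
  obtain ⟨g, hg⟩ := Ideal.mem_span_singleton'.mp hab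
  obtain ⟨m, rfl⟩ := Nat.exists_eq_add_one.mpr (b.totalDegree.zero_le.trans_lt hn)
  rw [show a = g * (X 0 - C c * X 1) + (b : MvPowerSeries (Fin 2) R) by rw [hg]; ring, map_add,
    dehomogenize_succ_mul_X_sub_C_mul_X, dehomogenize_coe_of_totalDegree_lt b hn, add_zero]
  simp

end CommRing

end MvPowerSeries

open MvPowerSeries

/-- Let `k` be an uncountable field and `a ∈ k[[u,v]]` a formal power series.
Suppose that for every polynomial `f ∈ k[u,v]` with `f(0,0) = 0` there is a
polynomial `b ∈ k[u,v]` with `a ≡ b` modulo the ideal generated by `f` in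
`k[[u,v]]`. Then `a` is a polynomial. -/
theorem polynomial_of_congruent_to_polynomial_mod_every_f
    {k : Type*} [Field k] [Uncountable k] (a : MvPowerSeries (Fin 2) k)
    (h : ∀ f : MvPolynomial (Fin 2) k, MvPolynomial.constantCoeff f = 0 →
      ∃ b : MvPolynomial (Fin 2) k,
        a - (b : MvPowerSeries (Fin 2) k) ∈
          Ideal.span {(f : MvPowerSeries (Fin 2) k)}) :
    ∃ p : MvPolynomial (Fin 2) k, a = (p : MvPowerSeries (Fin 2) k) := by
  have hline : ∀ c : k, ∃ N, ∀ n, N < n → (dehomogenize n a).IsRoot c := fun c => by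
    obtain ⟨b, hb⟩ := h (MvPolynomial.X 0 - MvPolynomial.C c * MvPolynomial.X 1) (by simp)
    refine ⟨b.totalDegree, fun n hn => isRoot_dehomogenize_of_sub_mem_span ?_ hn⟩
    simpa using hb
  choose N hN using hline
  obtain ⟨n₀, hn₀⟩ := exists_infinite_fiber_of_uncountable N
  refine ⟨truncTotal (n₀ + 1) a, eq_truncTotal_of_coeff_eq_zero_s4 fun d hd => ?_⟩
  have hroots : N ⁻¹' {n₀} ⊆ {c | (dehomogenize d.degree a).IsRoot c} :=
    fun c hc => hN c _ (by rw [hc]; omega)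
  rw [← coeff_dehomogenize_degree, Polynomial.eq_zero_of_infinite_isRoot _ (hn₀.mono hroots),
    Polynomial.coeff_zero]
end

section
/- Let R be a countable commutative Noetherian integral domain. Then there exists a decreasing sequence of nonzero ideals 𝔞₁ ⊇ 𝔞₂ ⊇ ⋯ of R such that every nonzero ideal of R contains 𝔞_n for some n. (For example, one may take 𝔞₁ = 𝔭₁ and 𝔞_n = 𝔞_{n-1}²·𝔭_n, where 𝔭₁, 𝔭₂, … enumerates the nonzero prime ideals of R.) -/
/-- Let `R` be a countable commutative Noetherian integral domain. Then there exists
a decreasing sequence of nonzero ideals `𝔞₀ ⊇ 𝔞₁ ⊇ ⋯` such that every nonzero ideal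
of `R` contains some `𝔞 n`. -/
theorem exists_cofinal_decreasing_sequence_of_nonzero_ideals
    (R : Type*) [CommRing R] [IsDomain R] [IsNoetherianRing R] [Countable R] :
    ∃ a : ℕ → Ideal R,
      (∀ n, a n ≠ ⊥) ∧ (∀ n, a (n + 1) ≤ a n) ∧
      ∀ b : Ideal R, b ≠ ⊥ → ∃ n, a n ≤ b := by
  have hne : Nonempty {x : R // x ≠ 0} := ⟨⟨1, one_ne_zero⟩⟩
  obtain ⟨f, hf⟩ := exists_surjective_nat {x : R // x ≠ 0}
  refine ⟨fun n => Ideal.span {∏ i ∈ Finset.range n, (f i : R)}, ?_, ?_, ?_⟩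
  · intro n
    rw [Ne, Ideal.span_singleton_eq_bot]
    exact Finset.prod_ne_zero_iff.2 fun i _ => (f i).2
  · intro n
    simp only []
    rw [Finset.prod_range_succ]
    exact Ideal.span_singleton_le_span_singleton.2 ⟨(f n : R), rfl⟩
  · intro b hb
    obtain ⟨x, hxb, hx⟩ := Submodule.exists_mem_ne_zero_of_ne_bot hb
    obtain ⟨n, hn⟩ := hf ⟨x, hx⟩
    refine ⟨n + 1, le_trans ?_ ((Ideal.span_singleton_le_iff_mem b).2 hxb)⟩
    refine Ideal.span_singleton_le_span_singleton.2 ?_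
    have : (f n : R) = x := congrArg Subtype.val hn
    rw [← this]
    exact Finset.dvd_prod_of_mem _ (Finset.self_mem_range_succ n)
end

section
/- Let k be a countable field and R = k[x,y] the polynomial ring in two variables. Then the canonical ring homomorphism R → lim_{𝔞 ≠ 0} R/𝔞, into the inverse limit of R/𝔞 over all nonzero ideals 𝔞 of R, is injective but not surjective. -/
/-- A family of elements of the quotients `R ⧸ 𝔞`, indexed by the nonzero ideals `𝔞`
of `R`, is compatible if it commutes with the natural quotient (transition) maps.
Such families are exactly the elements of the inverse limit `lim_{𝔞 ≠ 0} R ⧸ 𝔞`. -/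
def IsCompatibleFamily {R : Type*} [CommRing R]
    (x : ∀ a : {a : Ideal R // a ≠ ⊥}, R ⧸ a.1) : Prop :=
  ∀ (a b : {a : Ideal R // a ≠ ⊥}) (h : a.1 ≤ b.1),
    Ideal.Quotient.factor (S := a.1) (T := b.1) h (x a) = x b

/-!
In a domain `R` with a nonzero nonunit `t`, a nonzero `r` avoids the nonzero ideal `(r t)`,
which gives injectivity. If moreover `R` is countable, enumerating its nonzero elements `e i`
gives a strictly decreasing chain of nonzero principal ideals `I n = (∏_{i<n} t e i)` that is
cofinal among the nonzero ideals, so the inverse limit is that of the tower `R ⧸ I n`. Choosing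
`g n ∈ I n \ I (n+1)`, every bit sequence `b : ℕ → Bool` gives a Cauchy sequence of partial sums
of `∑ b n g n`, and distinct bit sequences give distinct compatible families. Hence the inverse
limit is uncountable, while the image of the countable ring `R` is not.
-/

open Ideal

section Tower

variable {R : Type*} [CommRing R] {I : ℕ → Ideal R}
  (hcof : ∀ a : {a : Ideal R // a ≠ ⊥}, ∃ n, I n ≤ a.1)

/-- The limit in `lim_{𝔞 ≠ 0} R ⧸ 𝔞` of a sequence `r` that is Cauchy for the cofinal tower `I`. -/
noncomputable def towerFamily (r : ℕ → R) (a : {a : Ideal R // a ≠ ⊥}) : R ⧸ a.1 :=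
  Ideal.Quotient.mk a.1 (r (hcof a).choose)

theorem towerFamily_eq_mk {r : ℕ → R}
    (hr : ∀ ⦃n m⦄, n ≤ m → r m - r n ∈ I n) {a : {a : Ideal R // a ≠ ⊥}} {n : ℕ}
    (hn : I n ≤ a.1) : towerFamily hcof r a = Ideal.Quotient.mk a.1 (r n) := by
  set N := (hcof a).choose
  have hN : I N ≤ a.1 := (hcof a).choose_spec
  rw [towerFamily, Ideal.Quotient.eq, ← sub_sub_sub_cancel_left _ _ (r (max n N))]
  exact sub_mem (hn (hr (le_max_left n N))) (hN (hr (le_max_right n N)))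

theorem isCompatibleFamily_towerFamily {r : ℕ → R}
    (hr : ∀ ⦃n m⦄, n ≤ m → r m - r n ∈ I n) : IsCompatibleFamily (towerFamily hcof r) :=
  fun a _ hab => (Ideal.Quotient.factor_mk hab _).trans
    (towerFamily_eq_mk hcof hr ((hcof a).choose_spec.trans hab)).symm

def bitSum (g : ℕ → R) (b : ℕ → Bool) (n : ℕ) : R :=
  ∑ i ∈ Finset.range n, if b i then g i else 0

theorem bitSum_sub_mem (hI : Antitone I) {g : ℕ → R} (hg : ∀ n, g n ∈ I n) (b : ℕ → Bool)
    ⦃n m : ℕ⦄ (h : n ≤ m) : bitSum g b m - bitSum g b n ∈ I n := by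
  rw [bitSum, bitSum, ← Finset.sum_Ico_eq_sub _ h]
  refine Ideal.sum_mem _ fun i hi => ?_
  split_ifs
  · exact hI (Finset.mem_Ico.1 hi).1 (hg i)
  · exact zero_mem _

theorem towerFamily_bitSum_injective (hI : Antitone I) (hbot : ∀ n, I n ≠ ⊥) {g : ℕ → R}
    (hg : ∀ n, g n ∈ I n) (hg' : ∀ n, g n ∉ I (n + 1)) :
    Function.Injective fun b => towerFamily hcof (bitSum g b) := by
  intro b b' h
  funext i
  induction i using Nat.strong_induction_on with
  | _ i ih =>
  have hlow : bitSum g b i = bitSum g b' i :=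
    Finset.sum_congr rfl fun j hj => by rw [ih j (Finset.mem_range.1 hj)]
  have hdiff : bitSum g b (i + 1) - bitSum g b' (i + 1) ∈ I (i + 1) := by
    have := congrFun h ⟨I (i + 1), hbot _⟩
    dsimp only at this
    rwa [towerFamily_eq_mk hcof (bitSum_sub_mem hI hg b) le_rfl,
      towerFamily_eq_mk hcof (bitSum_sub_mem hI hg b') le_rfl, Ideal.Quotient.eq] at this
  rw [bitSum, bitSum, Finset.sum_range_succ, Finset.sum_range_succ, ← bitSum, ← bitSum, hlow,
    add_sub_add_left_eq_sub] at hdiff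
  cases hb : b i <;> cases hb' : b' i <;> simp_all

theorem not_countable_setOf_isCompatibleFamily (hI : StrictAnti I) (hbot : ∀ n, I n ≠ ⊥)
    (hcof : ∀ a : {a : Ideal R // a ≠ ⊥}, ∃ n, I n ≤ a.1) :
    ¬ {x : ∀ a : {a : Ideal R // a ≠ ⊥}, R ⧸ a.1 | IsCompatibleFamily x}.Countable := by
  intro hcount
  choose g hg hg' using fun n => SetLike.exists_of_lt (hI (Nat.lt_succ_self n))
  have hinj := towerFamily_bitSum_injective hcof hI.antitone hbot hg hg'
  have hmaps : Set.MapsTo (fun b => towerFamily hcof (bitSum g b)) Set.univ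
      {x | IsCompatibleFamily x} := fun b _ =>
    isCompatibleFamily_towerFamily hcof (bitSum_sub_mem hI.antitone hg b)
  have huncount : Uncountable (ℕ → Bool) :=
    Cardinal.aleph0_lt_mk_iff.1 (by simpa [← Cardinal.power_def] using Cardinal.aleph0_lt_continuum)
  exact not_countable (Set.countable_univ_iff.1 (hmaps.countable_of_injOn hinj.injOn hcount))

theorem not_forall_isCompatibleFamily_exists_mk_eq [Countable R] (hI : StrictAnti I)
    (hbot : ∀ n, I n ≠ ⊥) (hcof : ∀ a : {a : Ideal R // a ≠ ⊥}, ∃ n, I n ≤ a.1) :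
    ¬ ∀ x : ∀ a : {a : Ideal R // a ≠ ⊥}, R ⧸ a.1,
      IsCompatibleFamily x → ∃ r : R, ∀ a, Ideal.Quotient.mk a.1 r = x a := by
  intro h
  refine not_countable_setOf_isCompatibleFamily hI hbot hcof <|
    (Set.countable_range fun (r : R) (a : {a : Ideal R // a ≠ ⊥}) =>
      Ideal.Quotient.mk a.1 r).mono fun x hx => ?_
  obtain ⟨r, hr⟩ := h x hx
  exact ⟨r, funext hr⟩

end Tower

section Domain

variable {R : Type*} [CommRing R] [IsDomain R] {t : R}

theorem exists_ne_bot_notMem (ht0 : t ≠ 0) (ht : ¬ IsUnit t) {r : R} (hr : r ≠ 0) :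
    ∃ a : Ideal R, a ≠ ⊥ ∧ r ∉ a := by
  refine ⟨span {r * t}, by simpa [span_singleton_eq_bot] using mul_ne_zero hr ht0, fun h => ?_⟩
  have hdvd : r * t ∣ r * 1 := by rwa [mul_one, ← mem_span_singleton]
  exact ht (isUnit_of_dvd_one ((mul_dvd_mul_iff_left hr).1 hdvd))

theorem injective_mk_of_ne_zero_not_isUnit (ht0 : t ≠ 0) (ht : ¬ IsUnit t) :
    Function.Injective fun (r : R) (a : {a : Ideal R // a ≠ ⊥}) => Ideal.Quotient.mk a.1 r := by
  intro r r' h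
  by_contra hne
  obtain ⟨a, ha, hmem⟩ := exists_ne_bot_notMem ht0 ht (sub_ne_zero.2 hne)
  exact hmem (Ideal.Quotient.eq.1 (congrFun h ⟨a, ha⟩))

theorem exists_strictAnti_cofinal_of_countable [Countable R] (ht0 : t ≠ 0) (ht : ¬ IsUnit t) :
    ∃ I : ℕ → Ideal R, StrictAnti I ∧ (∀ n, I n ≠ ⊥) ∧
      ∀ a : {a : Ideal R // a ≠ ⊥}, ∃ n, I n ≤ a.1 := by
  have : Nonempty {r : R // r ≠ 0} := ⟨⟨t, ht0⟩⟩
  obtain ⟨e, he⟩ := exists_surjective_nat {r : R // r ≠ 0}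
  set g : ℕ → R := fun n => ∏ i ∈ Finset.range n, t * e i
  have hg0 : ∀ n, g n ≠ 0 := fun n =>
    Finset.prod_ne_zero_iff.2 fun i _ => mul_ne_zero ht0 (e i).2
  refine ⟨fun n => span {g n}, strictAnti_nat_of_succ_lt fun n => ?_,
    fun n => by simpa [span_singleton_eq_bot] using hg0 n, fun a => ?_⟩
  · rw [span_singleton_lt_span_singleton]
    exact ⟨hg0 n, t * e n, fun h => ht (isUnit_of_mul_isUnit_left h), Finset.prod_range_succ _ _⟩
  · obtain ⟨r, hra, hr0⟩ := Submodule.exists_mem_ne_zero_of_ne_bot a.2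
    obtain ⟨i, hi⟩ := he ⟨r, hr0⟩
    refine ⟨i + 1, (span_singleton_le_iff_mem _).2 ?_⟩
    simp only [g, Finset.prod_range_succ, hi]
    exact a.1.mul_mem_left _ (a.1.mul_mem_left t hra)

end Domain

open MvPolynomial in
/-- For `R = k[x,y]` with `k` a countable field, the canonical map
`R → lim_{𝔞 ≠ 0} R ⧸ 𝔞` is injective but not surjective onto the inverse limit
(the set of compatible families). -/
theorem canonical_map_injective_not_surjective_of_countable
    (k : Type*) [Field k] [Countable k] :
    Function.Injective
        (fun (r : MvPolynomial (Fin 2) k)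
            (a : {a : Ideal (MvPolynomial (Fin 2) k) // a ≠ ⊥}) =>
          Ideal.Quotient.mk a.1 r) ∧
      ¬ ∀ x : ∀ a : {a : Ideal (MvPolynomial (Fin 2) k) // a ≠ ⊥},
            MvPolynomial (Fin 2) k ⧸ a.1,
          IsCompatibleFamily x →
            ∃ r : MvPolynomial (Fin 2) k, ∀ a, Ideal.Quotient.mk a.1 r = x a := by
  have hX0 : (X 0 : MvPolynomial (Fin 2) k) ≠ 0 := X_ne_zero 0
  have hX : ¬ IsUnit (X 0 : MvPolynomial (Fin 2) k) := X_prime.not_isUnit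
  have : Countable (MvPolynomial (Fin 2) k) := AddMonoidAlgebra.coeff_injective.countable
  obtain ⟨I, hI, hbot, hcof⟩ := exists_strictAnti_cofinal_of_countable hX0 hX
  exact ⟨injective_mk_of_ne_zero_not_isUnit hX0 hX,
    not_forall_isCompatibleFamily_exists_mk_eq hI hbot hcof⟩
end

section
/- Let A be a Noetherian integrally closed integral domain. Then A equals the intersection, inside its fraction field, of its localizations at all height-one prime ideals: A = ⋂_{ht P = 1} A_P. -/
/-! Write `x = a / b`. If `b ∤ a`, the class of `a` in `A ⧸ (b)` is nonzero, so it is killed only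
by elements of some associated prime `P = ((b) : c)` of `A ⧸ (b)`; then `x ∉ A_P`. Such a `P` has
height one. Indeed `c / b ∉ A` is not integral, so `(c / b) • P ⊄ P`, which produces `p ∈ P` and
`d ∉ P` with `d • P ⊆ (p)`. A prime `Q < P` then satisfies `(d / p) • Q ⊆ Q`, and if `Q ≠ 0`
this makes `d / p` integral, hence `d ∈ (p) ⊆ P`, a contradiction. -/

theorem IsIntegrallyClosed.dvd_of_span_singleton_mul_le {A : Type*} [CommRing A] [IsDomain A]
    [IsIntegrallyClosed A] {I : Ideal A} (hfg : I.FG) (hI : I ≠ ⊥) {u v : A}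
    (h : Ideal.span {u} * I ≤ Ideal.span {v} * I) : v ∣ u := by
  rcases eq_or_ne v 0 with rfl | hv
  · have : Ideal.span {u} * I = ⊥ := by simpa using h
    simpa [Ideal.mul_eq_bot, hI] using this
  let K := FractionRing A
  have hinj : Function.Injective (algebraMap A K) := IsFractionRing.injective A K
  have hvK : algebraMap A K v ≠ 0 := (map_ne_zero_iff _ hinj).mpr hv
  set N : Submodule A K := Submodule.map (Algebra.linearMap A K) I
  have hN : N ≠ ⊥ := by
    rw [← Submodule.map_bot (Algebra.linearMap A K)]
    exact (Submodule.map_injective_of_injective hinj).ne hI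
  have hstable : ∀ n ∈ N, (algebraMap A K u / algebraMap A K v) • n ∈ N := by
    rintro _ ⟨i, hi, rfl⟩
    obtain ⟨j, hj, hij⟩ := Ideal.mem_span_singleton_mul.mp
      (h (Ideal.mul_mem_mul (Ideal.mem_span_singleton_self u) hi))
    refine ⟨j, hj, ?_⟩
    simp only [Algebra.linearMap_apply, smul_eq_mul]
    rw [div_mul_eq_mul_div, eq_div_iff hvK, ← map_mul, ← map_mul, mul_comm j, hij]
  obtain ⟨r, hr⟩ := IsIntegrallyClosed.isIntegral_iff.mp
    (isIntegral_of_smul_mem_submodule N hN (Submodule.FG.map _ hfg) _ hstable)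
  refine ⟨r, hinj ?_⟩
  rw [map_mul, hr, mul_div_cancel₀ _ hvK]

theorem Ideal.eq_bot_of_lt_of_span_singleton_mul_le {A : Type*} [CommRing A] [IsDomain A]
    [IsNoetherianRing A] [IsIntegrallyClosed A] {P Q : Ideal A} [hQ : Q.IsPrime] {p d : A}
    (hp : p ∈ P) (hd : d ∉ P) (hdP : Ideal.span {d} * P ≤ Ideal.span {p}) (hQP : Q < P) :
    Q = ⊥ := by
  by_contra hQbot
  have hdQ : d ∉ Q := fun h ↦ hd (hQP.le h)
  have hpQ : p ∉ Q := by
    intro hpQ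
    refine hQP.not_ge fun t ht ↦ ?_
    have htd : d * t ∈ Q := (Ideal.span_singleton_le_iff_mem Q).mpr hpQ
      (hdP (Ideal.mul_mem_mul (Ideal.mem_span_singleton_self d) ht))
    exact (hQ.mem_or_mem htd).resolve_left hdQ
  have hdQ_le : Ideal.span {d} * Q ≤ Ideal.span {p} * Q := by
    rw [Ideal.span_singleton_mul_le_iff]
    intro q hq
    obtain ⟨e, he⟩ := Ideal.mem_span_singleton'.mp
      (hdP (Ideal.mul_mem_mul (Ideal.mem_span_singleton_self d) (hQP.le hq)))
    have heQ : e ∈ Q := (hQ.mem_or_mem (he ▸ Q.mul_mem_left d hq)).resolve_right hpQ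
    exact Ideal.mem_span_singleton_mul.mpr ⟨e, heQ, by rw [← he, mul_comm]⟩
  obtain ⟨r, rfl⟩ := IsIntegrallyClosed.dvd_of_span_singleton_mul_le
    (IsNoetherian.noetherian Q) hQbot hdQ_le
  exact hd (P.mul_mem_right r hp)

theorem Ideal.exists_span_singleton_mul_colon_le {A : Type*} [CommRing A] [IsDomain A]
    [IsNoetherianRing A] [IsIntegrallyClosed A] {b c : A} (hb : b ≠ 0)
    (hc : c ∉ Ideal.span {b}) :
    ∃ p ∈ (Ideal.span {b}).colon {c}, ∃ d ∉ (Ideal.span {b}).colon {c},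
      Ideal.span {d} * (Ideal.span {b}).colon {c} ≤ Ideal.span {p} := by
  set P := (Ideal.span {b}).colon {c}
  have hmem : ∀ s, s ∈ P ↔ b ∣ s * c := fun s ↦ by
    rw [Submodule.mem_colon_singleton, smul_eq_mul, Ideal.mem_span_singleton]
  have hbP : b ∈ P := (hmem b).mpr (dvd_mul_right b c)
  obtain ⟨p, hp, d, hd, hpc⟩ : ∃ p ∈ P, ∃ d ∉ P, p * c = b * d := by
    by_contra! hP
    refine hc (Ideal.mem_span_singleton.mpr ?_)
    refine IsIntegrallyClosed.dvd_of_span_singleton_mul_le (IsNoetherian.noetherian P)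
      (fun h ↦ hb (by simpa [h] using hbP)) ?_
    rw [Ideal.span_singleton_mul_le_iff]
    intro t ht
    obtain ⟨e, he⟩ := (hmem t).mp ht
    have heP : e ∈ P := by
      by_contra heP
      exact hP t ht e heP he
    exact Ideal.mem_span_singleton_mul.mpr ⟨e, heP, by rw [← he, mul_comm]⟩
  refine ⟨p, hp, d, hd, (Ideal.span_singleton_mul_le_iff).mpr fun t ht ↦ ?_⟩
  obtain ⟨e, he⟩ := (hmem t).mp ht
  refine Ideal.mem_span_singleton.mpr ⟨e, mul_left_cancel₀ hb ?_⟩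
  linear_combination p * he - t * hpc

theorem Submodule.colon_bot_singleton_quotient_mk {A : Type*} [CommRing A] (I : Ideal A) (c : A) :
    (⊥ : Submodule A (A ⧸ I)).colon {Ideal.Quotient.mk I c} = I.colon {c} := by
  ext s
  rw [mem_colon_singleton, mem_colon_singleton, mem_bot, smul_eq_mul, Algebra.smul_def,
    Ideal.Quotient.algebraMap_eq, ← map_mul, Ideal.Quotient.eq_zero_iff_mem]

theorem IsAssociatedPrime.eq_bot_of_lt_of_quotient_span_singleton {A : Type*} [CommRing A]
    [IsDomain A] [IsNoetherianRing A] [IsIntegrallyClosed A] {b : A} (hb : b ≠ 0)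
    {P Q : Ideal A} [Q.IsPrime] (hP : IsAssociatedPrime P (A ⧸ Ideal.span {b})) (hQP : Q < P) :
    Q = ⊥ := by
  obtain ⟨hPprime, c', rfl⟩ := isAssociatedPrime_iff.mp hP
  obtain ⟨c, rfl⟩ := Ideal.Quotient.mk_surjective c'
  rw [Submodule.colon_bot_singleton_quotient_mk] at hPprime hQP
  have hc : c ∉ Ideal.span {b} := fun hc ↦ hPprime.ne_top
    ((Submodule.colon_eq_top_iff_subset _).mpr (Set.singleton_subset_iff.mpr hc))
  obtain ⟨p, hp, d, hd, hdP⟩ := Ideal.exists_span_singleton_mul_colon_le hb hc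
  exact Ideal.eq_bot_of_lt_of_span_singleton_mul_le hp hd hdP hQP

theorem dvd_of_forall_height_one_exists_dvd_mul {A : Type*} [CommRing A] [IsDomain A]
    [IsNoetherianRing A] [IsIntegrallyClosed A] {a b : A} (hb : b ≠ 0)
    (h : ∀ P : Ideal A, P.IsPrime → P ≠ ⊥ → (∀ Q : Ideal A, Q.IsPrime → Q < P → Q = ⊥) →
      ∃ s ∉ P, b ∣ s * a) :
    b ∣ a := by
  by_contra hab
  have ha : Ideal.Quotient.mk (Ideal.span {b}) a ≠ 0 := by
    rwa [Ne, Ideal.Quotient.eq_zero_iff_mem, Ideal.mem_span_singleton]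
  obtain ⟨P, hP, hle⟩ := exists_le_isAssociatedPrime_of_isNoetherianRing A _ ha
  rw [Submodule.colon_bot_singleton_quotient_mk] at hle
  have hmem : ∀ s, b ∣ s * a → s ∈ P := fun s hs ↦
    hle (by rwa [Submodule.mem_colon_singleton, smul_eq_mul, Ideal.mem_span_singleton])
  have hP0 : P ≠ ⊥ := fun hP0 ↦ hb (by simpa [hP0] using hmem b (dvd_mul_right b a))
  obtain ⟨s, hs, hsa⟩ := h P hP.isPrime hP0 fun Q _ hQP ↦
    hP.eq_bot_of_lt_of_quotient_span_singleton hb hQP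
  exact hs (hmem s hsa)

/-- A Noetherian integrally closed integral domain `A` equals the intersection,
inside its fraction field, of its localizations at all height-one primes: an
element `x` of the fraction field lies in `A_P` for every prime `P` of height one
(i.e. `P ≠ 0` and the only prime strictly below `P` is `0`) if and only if `x`
comes from `A`. -/
theorem mem_range_iff_mem_all_height_one_localizations
    {A : Type*} [CommRing A] [IsDomain A] [IsNoetherianRing A] [IsIntegrallyClosed A]
    (x : FractionRing A) :
    (∀ P : Ideal A, P.IsPrime → P ≠ ⊥ →
        (∀ Q : Ideal A, Q.IsPrime → Q < P → Q = ⊥) →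
        ∃ a s : A, s ∉ P ∧
          x * algebraMap A (FractionRing A) s = algebraMap A (FractionRing A) a) ↔
      ∃ a : A, x = algebraMap A (FractionRing A) a := by
  constructor
  · intro h
    have hinj := IsFractionRing.injective A (FractionRing A)
    obtain ⟨⟨a, b⟩, hab⟩ := IsLocalization.surj (nonZeroDivisors A) x
    have hb : (b : A) ≠ 0 := nonZeroDivisors.coe_ne_zero b
    obtain ⟨r, rfl⟩ := dvd_of_forall_height_one_exists_dvd_mul hb fun P hP hP0 hP1 ↦ by
      obtain ⟨a', s, hs, hxs⟩ := h P hP hP0 hP1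
      refine ⟨s, hs, a', hinj ?_⟩
      simp only [map_mul]
      rw [← hab, ← hxs]
      ring
    refine ⟨r, mul_right_cancel₀ ((map_ne_zero_iff _ hinj).mpr hb) ?_⟩
    rw [hab, map_mul, mul_comm]
  · rintro ⟨a, rfl⟩ P hP _ _
    exact ⟨a, 1, (Ideal.ne_top_iff_one P).mp hP.ne_top, by simp⟩
end
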